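/- Let G be a finite triangle-free simple graph, λ > 0, and let 𝐈 be a random independent set drawn from the hard-core model on G at fugacity λ. Then for every vertex v ∈ V(G) and every integer j ≥ 0 such that the conditioning event has positive probability, the conditional probability that v is uncovered, given that v has exactly j uncovered neighbours, equals (1+λ)^{-j}. -/

import Mathlib

/-!
Split an independent set `I` as `S ∪ T` with `S = I \ N(v)` and `T = I ∩ N(v)`. Since `G` is
triangle-free, `N(v)` is independent, so the uncovered neighbours of `v` are determined by `S`
alone: they form the set `U(S)`, and `S ∪ T` is independent exactly when `S` is and `T ⊆ U(S)`.
Summing the weight `λ^|I|` over `T` for a fixed `S` therefore gives `λ^|S| (1 + λ)^|U(S)|`, while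
`v` is uncovered only for `T = ∅`, which contributes `λ^|S|`. On the event `|U(S)| = j` the two
sums differ by the factor `(1 + λ)^j`.
-/

/-- A finite set of vertices is independent in `G`. -/
def IndepFinset {V : Type*} (G : SimpleGraph V) (s : Finset V) : Prop :=
  ∀ u ∈ s, ∀ v ∈ s, ¬ G.Adj u v

instance {V : Type*} (G : SimpleGraph V) [DecidableRel G.Adj] (s : Finset V) :
    Decidable (IndepFinset G s) :=
  inferInstanceAs (Decidable (∀ u ∈ s, ∀ v ∈ s, ¬ G.Adj u v))

/-- The probability that the hard-core model on `G` at fugacity `lam` produces the set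
`I`: it is `lam^|I| / Z_G(lam)` if `I` is independent, and `0` otherwise. -/
noncomputable def hcProb {V : Type*} [Fintype V] (G : SimpleGraph V) [DecidableRel G.Adj]
    (lam : ℝ) (I : Finset V) : ℝ :=
  (if IndepFinset G I then lam ^ I.card else 0) /
    ∑ J : Finset V, if IndepFinset G J then lam ^ J.card else 0

open Finset

lemma sum_eq_sum_powerset_compl_sum_powerset {α β : Type*} [Fintype α] [DecidableEq α]
    [AddCommMonoid β] (N : Finset α) (f : Finset α → β) :
    ∑ I, f I = ∑ S ∈ Nᶜ.powerset, ∑ T ∈ N.powerset, f (S ∪ T) := by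
  rw [← sum_product']
  refine sum_nbij' (fun I => (I \ N, I ∩ N)) (fun p => p.1 ∪ p.2) ?_ ?_ ?_ ?_ ?_
  · intro I _
    simp only [mem_product, mem_powerset]
    exact ⟨fun x hx => mem_compl.mpr (mem_sdiff.mp hx).2, inter_subset_right⟩
  · intro p _
    exact mem_univ _
  · intro I _
    exact sdiff_union_inter I N
  · rintro ⟨S, T⟩ hST
    simp only [mem_product, mem_powerset, subset_compl_iff_disjoint_right] at hST
    obtain ⟨hS, hT⟩ := hST
    simp only [union_sdiff_distrib, hS.sdiff_eq_left, sdiff_eq_empty_iff_subset.mpr hT,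
      union_empty, union_inter_distrib_right, disjoint_iff_inter_eq_empty.mp hS,
      inter_eq_left.mpr hT, empty_union]
  · intro I _
    rw [sdiff_union_inter]

lemma sum_ite_inter_eq_empty_and {α β : Type*} [Fintype α] [DecidableEq α] [AddCommMonoid β]
    (N : Finset α) (P : Finset α → Prop) [DecidablePred P] (f : Finset α → β) :
    ∑ I, (if N ∩ I = ∅ ∧ P I then f I else 0) = ∑ S ∈ Nᶜ.powerset, if P S then f S else 0 := by
  rw [← sum_filter, ← sum_filter]
  congr 1
  ext I
  simp [subset_compl_iff_disjoint_left, disjoint_iff_inter_eq_empty]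

lemma sum_powerset_pow_card {R α : Type*} [CommSemiring R] (a : R) (s : Finset α) :
    ∑ t ∈ s.powerset, a ^ #t = (1 + a) ^ #s := by
  simpa using (prod_one_add (f := fun _ => a) s).symm

section HardCore

variable {V : Type*} {G : SimpleGraph V}

noncomputable def hcWeight (G : SimpleGraph V) [DecidableRel G.Adj] (lam : ℝ) (I : Finset V) :
    ℝ :=
  if IndepFinset G I then lam ^ #I else 0

lemma sum_ite_hcProb [Fintype V] [DecidableRel G.Adj] (lam : ℝ) (P : Finset V → Prop)
    [DecidablePred P] :
    ∑ I, (if P I then hcProb G lam I else 0) =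
      (∑ I, if P I then hcWeight G lam I else 0) / ∑ I, hcWeight G lam I := by
  rw [sum_div]
  exact sum_congr rfl fun I _ => by split_ifs <;> simp [hcProb, hcWeight]

lemma indepFinset_union_iff [DecidableEq V] {S T : Finset V} :
    IndepFinset G (S ∪ T) ↔
      IndepFinset G S ∧ IndepFinset G T ∧ ∀ t ∈ T, ∀ s ∈ S, ¬ G.Adj t s := by
  simp only [IndepFinset, mem_union]
  constructor
  · intro h
    exact ⟨fun a ha b hb => h a (.inl ha) b (.inl hb), fun a ha b hb => h a (.inr ha) b (.inr hb),
      fun t ht s hs => h t (.inr ht) s (.inl hs)⟩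
  · rintro ⟨hS, hT, hTS⟩ a (ha | ha) b (hb | hb)
    · exact hS a ha b hb
    · exact fun hab => hTS b hb a ha hab.symm
    · exact hTS a ha b hb
    · exact hT a ha b hb

variable [Fintype V] [DecidableRel G.Adj]

lemma indepFinset_neighborFinset (hG : G.CliqueFree 3) (v : V) :
    IndepFinset G (G.neighborFinset v) := by
  intro u hu w hw huw
  rw [SimpleGraph.mem_neighborFinset] at hu hw
  exact G.isIndepSet_neighborSet_of_triangleFree hG v hu hw (G.ne_of_adj huw) huw

variable [DecidableEq V]

def uncoveredNbrs (G : SimpleGraph V) [DecidableRel G.Adj] (I : Finset V) (v : V) : Finset V :=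
  (G.neighborFinset v).filter fun u => G.neighborFinset u ∩ I = ∅

lemma subset_uncoveredNbrs_iff {S T : Finset V} {v : V} :
    T ⊆ uncoveredNbrs G S v ↔ T ⊆ G.neighborFinset v ∧ ∀ t ∈ T, ∀ s ∈ S, ¬ G.Adj t s := by
  simp only [uncoveredNbrs, subset_iff, mem_filter, ← disjoint_iff_inter_eq_empty, disjoint_left,
    SimpleGraph.mem_neighborFinset]
  grind

lemma uncoveredNbrs_union_of_subset_neighborFinset (hG : G.CliqueFree 3) (S : Finset V)
    {T : Finset V} {v : V} (hT : T ⊆ G.neighborFinset v) :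
    uncoveredNbrs G (S ∪ T) v = uncoveredNbrs G S v := by
  refine filter_congr fun u hu => ?_
  have huT : G.neighborFinset u ∩ T = ∅ := disjoint_iff_inter_eq_empty.mp <|
    disjoint_left.mpr fun x hxu hxT =>
      indepFinset_neighborFinset hG v u hu x (hT hxT) ((G.mem_neighborFinset u x).mp hxu)
  rw [inter_union_distrib_left, huT, union_empty]

lemma hcWeight_union (hG : G.CliqueFree 3) (lam : ℝ) {S T : Finset V} {v : V}
    (hS : Disjoint S (G.neighborFinset v)) (hT : T ⊆ G.neighborFinset v) :
    hcWeight G lam (S ∪ T) =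
      if T ⊆ uncoveredNbrs G S v then hcWeight G lam S * lam ^ #T else 0 := by
  have hTindep : IndepFinset G T := fun a ha b hb =>
    indepFinset_neighborFinset hG v a (hT ha) b (hT hb)
  have hindep : IndepFinset G (S ∪ T) ↔ IndepFinset G S ∧ T ⊆ uncoveredNbrs G S v := by
    rw [indepFinset_union_iff, subset_uncoveredNbrs_iff]
    tauto
  rw [hcWeight, hcWeight, card_union_of_disjoint (hS.mono_right hT), pow_add]
  by_cases hU : T ⊆ uncoveredNbrs G S v <;> by_cases hSi : IndepFinset G S <;>
    simp [hindep, hU, hSi]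

lemma sum_powerset_hcWeight_union (hG : G.CliqueFree 3) (lam : ℝ) {S : Finset V} {v : V}
    (hS : Disjoint S (G.neighborFinset v)) :
    ∑ T ∈ (G.neighborFinset v).powerset, hcWeight G lam (S ∪ T) =
      hcWeight G lam S * (1 + lam) ^ #(uncoveredNbrs G S v) := by
  have hU : uncoveredNbrs G S v ⊆ G.neighborFinset v := filter_subset _ _
  calc ∑ T ∈ (G.neighborFinset v).powerset, hcWeight G lam (S ∪ T)
      = ∑ T ∈ (G.neighborFinset v).powerset with T ⊆ uncoveredNbrs G S v,
          hcWeight G lam S * lam ^ #T := by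
        rw [sum_filter]
        exact sum_congr rfl fun T hT => hcWeight_union hG lam hS (mem_powerset.mp hT)
    _ = ∑ T ∈ (uncoveredNbrs G S v).powerset, hcWeight G lam S * lam ^ #T := by
        congr 1
        ext T
        simp only [mem_filter, mem_powerset]
        exact ⟨And.right, fun h => ⟨h.trans hU, h⟩⟩
    _ = hcWeight G lam S * (1 + lam) ^ #(uncoveredNbrs G S v) := by
        rw [← mul_sum, sum_powerset_pow_card]

lemma sum_ite_card_uncoveredNbrs_hcWeight (hG : G.CliqueFree 3) (lam : ℝ) (v : V) (j : ℕ) :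
    ∑ I, (if #(uncoveredNbrs G I v) = j then hcWeight G lam I else 0) =
      (∑ S ∈ (G.neighborFinset v)ᶜ.powerset,
        if #(uncoveredNbrs G S v) = j then hcWeight G lam S else 0) * (1 + lam) ^ j := by
  rw [sum_eq_sum_powerset_compl_sum_powerset (G.neighborFinset v), sum_mul]
  refine sum_congr rfl fun S hS => ?_
  have hSN : Disjoint S (G.neighborFinset v) :=
    subset_compl_iff_disjoint_right.mp (mem_powerset.mp hS)
  rw [sum_congr rfl fun T hT => by
    rw [uncoveredNbrs_union_of_subset_neighborFinset hG S (mem_powerset.mp hT)]]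
  split_ifs with hj
  · rw [sum_powerset_hcWeight_union hG lam hSN, hj]
  · simp

lemma sum_ite_uncovered_div_sum_ite_eq_inv_pow (hG : G.CliqueFree 3) (lam : ℝ) (v : V) (j : ℕ)
    (hB : ∑ I, (if #(uncoveredNbrs G I v) = j then hcWeight G lam I else 0) ≠ 0) :
    (∑ I, if G.neighborFinset v ∩ I = ∅ ∧ #(uncoveredNbrs G I v) = j then hcWeight G lam I else 0) /
      (∑ I, if #(uncoveredNbrs G I v) = j then hcWeight G lam I else 0) = ((1 + lam) ^ j)⁻¹ := by
  rw [sum_ite_card_uncoveredNbrs_hcWeight hG] at hB ⊢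
  rw [sum_ite_inter_eq_empty_and (G.neighborFinset v) (fun I => #(uncoveredNbrs G I v) = j),
    div_mul_cancel_left₀ (left_ne_zero_of_mul hB)]

end HardCore

theorem hard_core_uncovered_given_j_uncovered_nbrs_general {V : Type*} [Fintype V] [DecidableEq V]
    (G : SimpleGraph V) [DecidableRel G.Adj] (hG : G.CliqueFree 3)
    (lam : ℝ) (v : V) (j : ℕ)
    (hpos : 0 < ∑ I : Finset V,
      if ((G.neighborFinset v).filter fun u => G.neighborFinset u ∩ I = ∅).card = j then
        hcProb G lam I else 0) :
    (∑ I : Finset V,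
        if G.neighborFinset v ∩ I = ∅ ∧
            ((G.neighborFinset v).filter fun u => G.neighborFinset u ∩ I = ∅).card = j then
          hcProb G lam I else 0) /
      (∑ I : Finset V,
        if ((G.neighborFinset v).filter fun u => G.neighborFinset u ∩ I = ∅).card = j then
          hcProb G lam I else 0) =
      (1 + lam) ^ (-(j : ℝ)) := by
  rw [sum_ite_hcProb] at hpos
  obtain ⟨hB0, hZ⟩ := div_ne_zero_iff.mp hpos.ne'
  rw [sum_ite_hcProb, sum_ite_hcProb, div_div_div_cancel_right₀ hZ, Real.rpow_neg_natCast,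
    zpow_neg, zpow_natCast]
  -- `exact`, not `rw`: the statement spells out `uncoveredNbrs`, also inside decidability instances
  exact sum_ite_uncovered_div_sum_ite_eq_inv_pow hG lam v j hB0

/-- Fact 2 of the paper: in the hard-core model on a triangle-free graph at fugacity
`lam > 0`, conditional on `v` having exactly `j` uncovered neighbours (an event assumed
to have positive probability), the probability that `v` itself is uncovered is
`(1+lam)^{-j}`. -/
theorem hard_core_uncovered_given_j_uncovered_nbrs {V : Type*} [Fintype V] [DecidableEq V]
    (G : SimpleGraph V) [DecidableRel G.Adj] (hG : G.CliqueFree 3)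
    (lam : ℝ) (hlam : 0 < lam) (v : V) (j : ℕ)
    (hpos : 0 < ∑ I : Finset V,
      if ((G.neighborFinset v).filter fun u => G.neighborFinset u ∩ I = ∅).card = j then
        hcProb G lam I else 0) :
    (∑ I : Finset V,
        if G.neighborFinset v ∩ I = ∅ ∧
            ((G.neighborFinset v).filter fun u => G.neighborFinset u ∩ I = ∅).card = j then
          hcProb G lam I else 0) /
      (∑ I : Finset V,
        if ((G.neighborFinset v).filter fun u => G.neighborFinset u ∩ I = ∅).card = j then
          hcProb G lam I else 0) =
      (1 + lam) ^ (-(j : ℝ)) :=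
  hard_core_uncovered_given_j_uncovered_nbrs_general G hG lam v j hpos
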